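/- Let r, g closed convex proper, f convex differentiable with L-Lipschitz gradient, 0 < α < 3/(2L), and suppose the PPG residual operator p has a zero. Then the iterates z^{k+1} = z^k − αp(z^k) converge to some z^∞ with p(z^∞) = 0, and x^{k+1/2} = prox_{αr}(z^k) converges to x* = prox_{αr}(z^∞). -/

import Mathlib

open Set Filter Topology
open scoped RealInnerProductSpace

noncomputable section

/-- `f` is closed (lower semicontinuous), convex, and proper
as an extended-real-valued function. -/
def ClosedConvexProper {E : Type*} [NormedAddCommGroup E] [NormedSpace ℝ E]
    (f : E → EReal) : Prop :=
  LowerSemicontinuous f ∧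
  (∀ (a b : ℝ) (x y : E), 0 ≤ a → 0 ≤ b → a + b = 1 →
    f (a • x + b • y) ≤ (a : EReal) * f x + (b : EReal) * f y) ∧
  (∀ x, f x ≠ ⊥) ∧ (∃ x, f x ≠ ⊤)

/-- `p` is a minimizer of the prox objective of the extended-real-valued `f` at `x₀`. -/
def IsProxPt {E : Type*} [NormedAddCommGroup E] [InnerProductSpace ℝ E]
    (f : E → EReal) (x₀ p : E) : Prop :=
  IsMinOn (fun x => f x + ((1 / 2 * ‖x - x₀‖ ^ 2 : ℝ) : EReal)) Set.univ p

/-- `p` is a minimizer of the prox objective of the real-valued `f` at `x₀`. -/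
def IsProxPtR {E : Type*} [NormedAddCommGroup E] [InnerProductSpace ℝ E]
    (f : E → ℝ) (x₀ p : E) : Prop :=
  IsMinOn (fun x => f x + 1 / 2 * ‖x - x₀‖ ^ 2) Set.univ p


/-!
For every zero `w` of `p`, firm nonexpansiveness of the two proximal maps and the Baillon–Haddad
cocoercivity of `∇f` give the Fejér inequality
`‖z⁺ - w‖² + (1 - αL/2) ‖αp(z)‖² ≤ ‖z - w‖²` for the step `z⁺ = z - αp(z)`, with
`1 - αL/2 > 0` since `α < 3/(2L)`. Hence the iterates stay bounded and the residuals are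
square-summable, so `p(zᵏ) → 0`. A cluster point of `(zᵏ)` is then a zero of `p` by continuity,
and Fejér monotonicity with respect to that zero upgrades subsequential convergence to
convergence of the whole sequence; `prox_{αr}` is continuous, which gives the last claim.
-/

def EConvex {E : Type*} [AddCommGroup E] [Module ℝ E] (f : E → EReal) : Prop :=
  ∀ (a b : ℝ) (x y : E), 0 ≤ a → 0 ≤ b → a + b = 1 →
    f (a • x + b • y) ≤ (a : EReal) * f x + (b : EReal) * f y

theorem EConvex.const_mul {E : Type*} [AddCommGroup E] [Module ℝ E] {f : E → EReal}
    (hf : EConvex f) {c : ℝ} (hc : 0 ≤ c) : EConvex fun x => (c : EReal) * f x := by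
  intro a b x y ha hb hab
  have hc' : (0 : EReal) ≤ c := EReal.coe_nonneg.mpr hc
  calc (c : EReal) * f (a • x + b • y)
      ≤ c * ((a : EReal) * f x + (b : EReal) * f y) :=
        mul_le_mul_of_nonneg_left (hf a b x y ha hb hab) hc'
    _ = (a : EReal) * (c * f x) + (b : EReal) * (c * f y) := by
      rw [EReal.left_distrib_of_nonneg_of_ne_top hc' (EReal.coe_ne_top c), mul_left_comm,
        mul_left_comm (c : EReal)]

section Prox

variable {E : Type*} [NormedAddCommGroup E] [InnerProductSpace ℝ E]

def FirmlyNonexpansive (T : E → E) : Prop :=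
  ∀ u v, ‖T u - T v‖ ^ 2 ≤ ⟪u - v, T u - T v⟫

theorem FirmlyNonexpansive.lipschitzWith {T : E → E} (hT : FirmlyNonexpansive T) :
    LipschitzWith 1 T := by
  refine LipschitzWith.of_dist_le_mul fun u v => ?_
  rw [NNReal.coe_one, one_mul, dist_eq_norm, dist_eq_norm]
  rcases eq_or_ne (T u - T v) 0 with h | h
  · rw [h, norm_zero]; positivity
  · have := (hT u v).trans (real_inner_le_norm _ _)
    rw [sq] at this
    exact le_of_mul_le_mul_right this (norm_pos_iff.mpr h)

theorem IsProxPt.ne_top {h : E → EReal} {u p x : E} (hp : IsProxPt h u p) (hx : h x ≠ ⊤) :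
    h p ≠ ⊤ := by
  intro htop
  have hmin := isMinOn_iff.mp hp x (mem_univ _)
  rw [htop, EReal.top_add_coe, top_le_iff] at hmin
  exact EReal.add_ne_top hx (EReal.coe_ne_top _) hmin

/-- The optimality condition of the prox problem, `u - p ∈ ∂h p`. -/
theorem IsProxPt.le_add_inner {h : E → EReal} (hh : EConvex h) {u p q : E}
    (hp : IsProxPt h u p) {cp cq : ℝ} (hcp : h p = cp) (hcq : h q = cq) :
    cp ≤ cq + ⟪p - u, q - p⟫ := by
  have key : ∀ t ∈ Ioc (0 : ℝ) 1, cp ≤ cq + ⟪p - u, q - p⟫ + t / 2 * ‖q - p‖ ^ 2 := by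
    intro t ⟨ht0, ht1⟩
    have hmin := isMinOn_iff.mp hp ((1 - t) • p + t • q) (mem_univ _)
    have hcv := hh (1 - t) t p q (by linarith) ht0.le (by ring)
    rw [hcp, hcq, ← EReal.coe_mul, ← EReal.coe_mul, ← EReal.coe_add] at hcv
    have hre : cp + 1 / 2 * ‖p - u‖ ^ 2 ≤
        (1 - t) * cp + t * cq + 1 / 2 * ‖(1 - t) • p + t • q - u‖ ^ 2 := by
      rw [← EReal.coe_le_coe_iff, EReal.coe_add, EReal.coe_add, ← hcp]
      exact hmin.trans (add_le_add_left hcv _)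
    have hnorm : ‖(1 - t) • p + t • q - u‖ ^ 2 =
        ‖p - u‖ ^ 2 + 2 * (t * ⟪p - u, q - p⟫) + t ^ 2 * ‖q - p‖ ^ 2 := by
      rw [show (1 - t) • p + t • q - u = (p - u) + t • (q - p) by module, norm_add_sq_real,
        real_inner_smul_right, norm_smul, Real.norm_eq_abs, abs_of_pos ht0, mul_pow]
    rw [hnorm] at hre
    refine le_of_mul_le_mul_left ?_ ht0
    nlinarith
  have hlim : Tendsto (fun t : ℝ => cq + ⟪p - u, q - p⟫ + t / 2 * ‖q - p‖ ^ 2)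
      (𝓝[>] 0) (𝓝 (cq + ⟪p - u, q - p⟫)) := by
    refine tendsto_nhdsWithin_of_tendsto_nhds ?_
    have : Continuous fun t : ℝ => cq + ⟪p - u, q - p⟫ + t / 2 * ‖q - p‖ ^ 2 := by fun_prop
    simpa using this.tendsto 0
  refine ge_of_tendsto hlim ?_
  filter_upwards [Ioc_mem_nhdsGT_of_mem (left_mem_Ico.mpr one_pos)] with t ht
  exact key t ht

theorem IsProxPt.norm_sub_sq_le_inner {h : E → EReal} (hh : EConvex h) (hbot : ∀ x, h x ≠ ⊥)
    {x₀ : E} (hx₀ : h x₀ ≠ ⊤) {u v pu pv : E} (hu : IsProxPt h u pu) (hv : IsProxPt h v pv) :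
    ‖pu - pv‖ ^ 2 ≤ ⟪u - v, pu - pv⟫ := by
  have hcu := (EReal.coe_toReal (hu.ne_top hx₀) (hbot pu)).symm
  have hcv := (EReal.coe_toReal (hv.ne_top hx₀) (hbot pv)).symm
  have h1 := hu.le_add_inner hh hcu hcv
  have h2 := hv.le_add_inner hh hcv hcu
  have e1 : ⟪pu - u, pv - pu⟫ + ⟪pv - v, pu - pv⟫ = ⟪u - v, pu - pv⟫ - ‖pu - pv‖ ^ 2 := by
    rw [← real_inner_self_eq_norm_sq]
    simp only [inner_sub_left, inner_sub_right, real_inner_comm]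
    ring
  linarith

theorem ClosedConvexProper.firmlyNonexpansive_of_isProxPt {h : E → EReal}
    (hh : ClosedConvexProper h) {α : ℝ} (hα : 0 < α) {Ph : E → E}
    (hPh : ∀ w, IsProxPt (fun x => (α : EReal) * h x) w (Ph w)) : FirmlyNonexpansive Ph := by
  obtain ⟨-, hconv, hbot, x₀, hx₀⟩ := hh
  have hα' : (0 : EReal) ≤ α := EReal.coe_nonneg.mpr hα.le
  have hαbot : ∀ x, (α : EReal) * h x ≠ ⊥ := fun x => (EReal.mul_ne_bot _ _).mpr
    ⟨.inl (EReal.coe_ne_bot α), .inr (hbot x), .inl (EReal.coe_ne_top α), .inl hα'⟩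
  have hαtop : (α : EReal) * h x₀ ≠ ⊤ := (EReal.mul_ne_top _ _).mpr
    ⟨.inl (EReal.coe_ne_bot α), .inr (hbot x₀), .inl (EReal.coe_ne_top α), .inr hx₀⟩
  exact fun u v =>
    (hPh u).norm_sub_sq_le_inner (EConvex.const_mul hconv hα.le) hαbot hαtop (hPh v)

end Prox

section Smooth

variable {E : Type*} [NormedAddCommGroup E] [InnerProductSpace ℝ E] [CompleteSpace E]

theorem HasGradientAt.hasDerivAt_comp_lineMap {f : E → ℝ} {g x y : E} {t : ℝ}
    (hf : HasGradientAt f g (AffineMap.lineMap (k := ℝ) x y t)) :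
    HasDerivAt (f ∘ AffineMap.lineMap (k := ℝ) x y) ⟪g, y - x⟫ t := by
  simpa using hf.hasFDerivAt.comp_hasDerivAt t AffineMap.hasDerivAt_lineMap

theorem ConvexOn.add_inner_le_of_hasGradientAt {f : E → ℝ} (hf : ConvexOn ℝ univ f) {g x : E}
    (hx : HasGradientAt f g x) (y : E) : f x + ⟪g, y - x⟫ ≤ f y := by
  have hline : ConvexOn ℝ univ (f ∘ AffineMap.lineMap (k := ℝ) x y) := by
    simpa using hf.comp_affineMap (AffineMap.lineMap (k := ℝ) x y)
  have hd : HasDerivAt (f ∘ AffineMap.lineMap (k := ℝ) x y) ⟪g, y - x⟫ 0 :=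
    HasGradientAt.hasDerivAt_comp_lineMap (by rwa [AffineMap.lineMap_apply_zero])
  have := hline.le_slope_of_hasDerivAt (mem_univ 0) (mem_univ 1) zero_lt_one hd
  simp only [slope_def_field, Function.comp_apply, AffineMap.lineMap_apply_one,
    AffineMap.lineMap_apply_zero, sub_zero, div_one] at this
  linarith

/-- The descent lemma. -/
theorem le_add_inner_add_of_lipschitz_gradient {f : E → ℝ} {f' : E → E}
    (hf : ∀ x, HasGradientAt f (f' x) x) {L : ℝ} (hLip : ∀ x y, ‖f' x - f' y‖ ≤ L * ‖x - y‖)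
    (x y : E) : f y ≤ f x + ⟪f' x, y - x⟫ + L / 2 * ‖y - x‖ ^ 2 := by
  set v := y - x
  set ℓ := AffineMap.lineMap (k := ℝ) x y
  set h : ℝ → ℝ := fun t => f (ℓ t) - t * ⟪f' x, v⟫ - L / 2 * t ^ 2 * ‖v‖ ^ 2
  have hd : ∀ t, HasDerivAt h (⟪f' (ℓ t) - f' x, v⟫ - L * t * ‖v‖ ^ 2) t := by
    intro t
    have := (((hf _).hasDerivAt_comp_lineMap (x := x) (y := y)).sub
      ((hasDerivAt_id t).mul_const ⟪f' x, v⟫)).sub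
      (((hasDerivAt_pow 2 t).const_mul (L / 2)).mul_const (‖v‖ ^ 2))
    refine HasDerivAt.congr_deriv (f := h) this ?_
    simp only [inner_sub_left, v]
    ring
  have hd_nonpos : ∀ t ∈ interior (Icc (0 : ℝ) 1), deriv h t ≤ 0 := by
    intro t ht
    rw [interior_Icc] at ht
    have hdist : ‖ℓ t - x‖ = t * ‖v‖ := by
      rw [← vsub_eq_sub, AffineMap.lineMap_vsub_left, vsub_eq_sub, norm_smul,
        Real.norm_of_nonneg ht.1.le]
    have := (real_inner_le_norm _ _).trans
      (mul_le_mul_of_nonneg_right ((hLip _ x).trans_eq (by rw [hdist])) (norm_nonneg v))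
    rw [(hd t).deriv]
    nlinarith
  have hanti : AntitoneOn h (Icc 0 1) :=
    antitoneOn_of_deriv_nonpos (convex_Icc 0 1)
      (fun t _ => (hd t).continuousAt.continuousWithinAt)
      (fun t _ => (hd t).differentiableAt.differentiableWithinAt) hd_nonpos
  have := hanti (left_mem_Icc.mpr zero_le_one) (right_mem_Icc.mpr zero_le_one) zero_le_one
  simp only [h, ℓ, AffineMap.lineMap_apply_one, AffineMap.lineMap_apply_zero] at this
  linarith

theorem IsMinOn.add_norm_sq_le_of_lipschitz_gradient {φ : E → ℝ} {φ' : E → E}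
    (hφ : ∀ x, HasGradientAt φ (φ' x) x) {L : ℝ} (hL : 0 < L)
    (hLip : ∀ x y, ‖φ' x - φ' y‖ ≤ L * ‖x - y‖) {a : E} (ha : IsMinOn φ univ a) (b : E) :
    φ a + 1 / (2 * L) * ‖φ' b‖ ^ 2 ≤ φ b := by
  have hmin := isMinOn_iff.mp ha (b - L⁻¹ • φ' b) (mem_univ _)
  have hdesc := le_add_inner_add_of_lipschitz_gradient hφ hLip b (b - L⁻¹ • φ' b)
  rw [sub_sub_cancel_left, inner_neg_right, real_inner_smul_right, real_inner_self_eq_norm_sq,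
    norm_neg, norm_smul, Real.norm_of_nonneg (inv_nonneg.mpr hL.le), mul_pow] at hdesc
  have : L / 2 * (L⁻¹ ^ 2 * ‖φ' b‖ ^ 2) = L⁻¹ * ‖φ' b‖ ^ 2 - 1 / (2 * L) * ‖φ' b‖ ^ 2 := by
    field_simp; ring
  linarith

theorem ConvexOn.add_inner_add_norm_sq_le {f : E → ℝ} (hf : ConvexOn ℝ univ f) {f' : E → E}
    (hf' : ∀ x, HasGradientAt f (f' x) x) {L : ℝ} (hL : 0 < L)
    (hLip : ∀ x y, ‖f' x - f' y‖ ≤ L * ‖x - y‖) (a b : E) :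
    f a + ⟪f' a, b - a⟫ + 1 / (2 * L) * ‖f' b - f' a‖ ^ 2 ≤ f b := by
  set φ : E → ℝ := fun w => f w - ⟪f' a, w⟫
  have hφ : ∀ w, HasGradientAt φ (f' w - f' a) w := fun w => by
    rw [hasGradientAt_iff_hasFDerivAt, map_sub]
    exact (hf' w).hasFDerivAt.sub (innerSL ℝ (f' a)).hasFDerivAt
  have hφconv : ConvexOn ℝ univ φ :=
    hf.sub ((innerSL ℝ (f' a)).toLinearMap.concaveOn convex_univ)
  have hmin : IsMinOn φ univ a := fun w _ => by
    simpa using hφconv.add_inner_le_of_hasGradientAt (hφ a) w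
  have := hmin.add_norm_sq_le_of_lipschitz_gradient hφ hL
    (fun x y => by simpa only [sub_sub_sub_cancel_right] using hLip x y) b
  simp only [φ, inner_sub_right] at this ⊢
  linarith

/-- The Baillon–Haddad theorem. -/
theorem ConvexOn.inv_mul_norm_sq_le_inner {f : E → ℝ} (hf : ConvexOn ℝ univ f) {f' : E → E}
    (hf' : ∀ x, HasGradientAt f (f' x) x) {L : ℝ} (hL : 0 < L)
    (hLip : ∀ x y, ‖f' x - f' y‖ ≤ L * ‖x - y‖) (x y : E) :
    L⁻¹ * ‖f' x - f' y‖ ^ 2 ≤ ⟪f' x - f' y, x - y⟫ := by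
  have hxy := hf.add_inner_add_norm_sq_le hf' hL hLip x y
  have hyx := hf.add_inner_add_norm_sq_le hf' hL hLip y x
  rw [norm_sub_rev] at hxy
  have : L⁻¹ = 1 / (2 * L) + 1 / (2 * L) := by field_simp; norm_num
  simp only [inner_sub_left, inner_sub_right] at hxy hyx ⊢
  nlinarith

end Smooth

section Residual

variable {E : Type*} [NormedAddCommGroup E] [InnerProductSpace ℝ E]

theorem norm_sub_sub_sq_add_le {e s t q : E} {α L : ℝ} (hα : 0 ≤ α) (hL : 0 < L)
    (hs : ‖s‖ ^ 2 ≤ ⟪e, s⟫) (ht : ‖t‖ ^ 2 ≤ ⟪(2 : ℝ) • s - e - α • q, t⟫)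
    (hq : L⁻¹ * ‖q‖ ^ 2 ≤ ⟪q, s⟫) :
    ‖e - (s - t)‖ ^ 2 + (1 - α * L / 2) * ‖s - t‖ ^ 2 ≤ ‖e‖ ^ 2 := by
  -- complete the square `‖q - (L / 2) • (s - t)‖ ^ 2` to absorb the `α • q` term of `ht`
  have hqt : 0 ≤ ⟪q, t⟫ + L / 4 * ‖s - t‖ ^ 2 := by
    have hq' : ‖q‖ ^ 2 ≤ L * ⟪q, s⟫ := by
      rwa [inv_mul_le_iff₀ hL] at hq
    have hsq := sq_nonneg ‖q - (L / 2) • (s - t)‖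
    rw [norm_sub_sq_real, real_inner_smul_right, norm_smul, Real.norm_of_nonneg (by positivity),
      inner_sub_right] at hsq
    refine nonneg_of_mul_nonneg_right ?_ hL
    nlinarith
  have hqt' := mul_nonneg (by positivity : 0 ≤ 2 * α) hqt
  simp only [← real_inner_self_eq_norm_sq, inner_sub_left, inner_sub_right, real_inner_smul_left,
    real_inner_comm e, real_inner_comm s t] at hs ht hqt' ⊢
  linear_combination 2 * hs + 2 * ht + hqt'

/-- `α` times the PPG residual `p` of the paper. -/
def ppgResidual (α : ℝ) (Pr Pg F : E → E) (z : E) : E :=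
  Pr z - Pg ((2 : ℝ) • Pr z - z - α • F (Pr z))

theorem continuous_ppgResidual {α : ℝ} {Pr Pg F : E → E} (hPr : Continuous Pr)
    (hPg : Continuous Pg) (hF : Continuous F) : Continuous (ppgResidual α Pr Pg F) := by
  unfold ppgResidual
  fun_prop

theorem norm_sub_ppgResidual_sub_sq_add_le {α L : ℝ} (hα : 0 ≤ α) (hL : 0 < L)
    {Pr Pg F : E → E} (hPr : FirmlyNonexpansive Pr) (hPg : FirmlyNonexpansive Pg)
    (hF : ∀ x y, L⁻¹ * ‖F x - F y‖ ^ 2 ≤ ⟪F x - F y, x - y⟫)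
    {w : E} (hw : ppgResidual α Pr Pg F w = 0) (y : E) :
    ‖y - ppgResidual α Pr Pg F y - w‖ ^ 2 + (1 - α * L / 2) * ‖ppgResidual α Pr Pg F y‖ ^ 2 ≤
      ‖y - w‖ ^ 2 := by
  set a := (2 : ℝ) • Pr y - y - α • F (Pr y)
  set aw := (2 : ℝ) • Pr w - w - α • F (Pr w)
  have hPgw : Pg aw = Pr w := (sub_eq_zero.mp hw).symm
  have hR : ppgResidual α Pr Pg F y = (Pr y - Pr w) - (Pg a - Pg aw) := by
    rw [hPgw, ppgResidual]
    abel
  have ha : a - aw = (2 : ℝ) • (Pr y - Pr w) - (y - w) - α • (F (Pr y) - F (Pr w)) := by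
    simp only [a, aw]
    module
  have key := norm_sub_sub_sq_add_le hα hL (hPr y w) (ha ▸ hPg a aw) (hF (Pr y) (Pr w))
  rwa [← hR, sub_right_comm] at key

end Residual

theorem tendsto_zero_of_add_norm_sq_le {E : Type*} [NormedAddCommGroup E] {a : ℕ → ℝ}
    {v : ℕ → E} {c : ℝ} (hc : 0 < c) (ha : ∀ k, 0 ≤ a k)
    (h : ∀ k, a (k + 1) + c * ‖v k‖ ^ 2 ≤ a k) : Tendsto v atTop (𝓝 0) := by
  have hsum : ∀ n, ∑ k ∈ Finset.range n, c * ‖v k‖ ^ 2 ≤ a 0 := fun n => by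
    suffices ∑ k ∈ Finset.range n, c * ‖v k‖ ^ 2 + a n ≤ a 0 by linarith [ha n]
    induction n with
    | zero => simp
    | succ n ih => rw [Finset.sum_range_succ]; linarith [h n]
  have hsq : Tendsto (fun k => ‖v k‖ ^ 2) atTop (𝓝 0) := by
    have := (summable_of_sum_range_le (fun k => by positivity) hsum).tendsto_atTop_zero
    simpa [hc.ne'] using this.const_mul c⁻¹
  rw [tendsto_zero_iff_norm_tendsto_zero]
  simpa using hsq.sqrt

theorem exists_mem_tendsto_of_fejer {X : Type*} [MetricSpace X] [ProperSpace X] {S : Set X}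
    {z : ℕ → X} (hS : S.Nonempty) (hz : ∀ w ∈ S, ∀ k, dist (z (k + 1)) w ≤ dist (z k) w)
    (hcl : ∀ x (φ : ℕ → ℕ), StrictMono φ → Tendsto (z ∘ φ) atTop (𝓝 x) → x ∈ S) :
    ∃ x ∈ S, Tendsto z atTop (𝓝 x) := by
  obtain ⟨w, hw⟩ := hS
  have hball : ∀ k, z k ∈ Metric.closedBall w (dist (z 0) w) := fun k =>
    Metric.mem_closedBall.mpr
      (antitone_nat_of_succ_le (f := fun k => dist (z k) w) (hz w hw) (Nat.zero_le k))
  obtain ⟨x, -, φ, hφ, hzφ⟩ := tendsto_subseq_of_bounded Metric.isBounded_closedBall hball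
  have hx := hcl x φ hφ hzφ
  refine ⟨x, hx, tendsto_iff_dist_tendsto_zero.mpr ?_⟩
  exact (tendsto_iff_tendsto_subseq_of_antitone (antitone_nat_of_succ_le (hz x hx))
    hφ.tendsto_atTop).mpr (tendsto_iff_dist_tendsto_zero.mp hzφ)

/-- Convergence of the PPG iterates to a zero of the residual operator. -/
theorem stmt15
    {d : ℕ} (α : ℝ) (hα : 0 < α)
    (r g : EuclideanSpace ℝ (Fin d) → EReal)
    (hr : ClosedConvexProper r) (hg : ClosedConvexProper g)
    (f : EuclideanSpace ℝ (Fin d) → ℝ) (hfconv : ConvexOn ℝ Set.univ f)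
    (f' : EuclideanSpace ℝ (Fin d) → EuclideanSpace ℝ (Fin d))
    (hf' : ∀ x, HasGradientAt f (f' x) x)
    (Pr Pg : EuclideanSpace ℝ (Fin d) → EuclideanSpace ℝ (Fin d))
    (hPr : ∀ w, IsProxPt (fun x => (α : EReal) * r x) w (Pr w))
    (hPg : ∀ w, IsProxPt (fun x => (α : EReal) * g x) w (Pg w))
    (P : EuclideanSpace ℝ (Fin d) → EuclideanSpace ℝ (Fin d))
    (hP : ∀ z, P z = α⁻¹ • (Pr z - Pg ((2 : ℝ) • Pr z - z - α • f' (Pr z))))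
    (L : ℝ) (hL : 0 < L)
    (hLip : ∀ x y, ‖f' x - f' y‖ ≤ L * ‖x - y‖)
    (hαL : α < 3 / (2 * L))
    (hfix : ∃ zs, P zs = 0)
    (z : ℕ → EuclideanSpace ℝ (Fin d))
    (hiter : ∀ k, z (k + 1) = z k - α • P (z k)) :
    ∃ zinf, Tendsto z atTop (𝓝 zinf) ∧ P zinf = 0 ∧
      Tendsto (fun k => Pr (z k)) atTop (𝓝 (Pr zinf)) := by
  have hPrf := hr.firmlyNonexpansive_of_isProxPt hα hPr
  have hPgf := hg.firmlyNonexpansive_of_isProxPt hα hPg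
  have hf'c : Continuous f' :=
    (LipschitzWith.of_dist_le' (by simpa only [dist_eq_norm] using hLip)).continuous
  have hαP : ∀ y, α • P y = ppgResidual α Pr Pg f' y := fun y => by
    rw [hP, smul_inv_smul₀ hα.ne', ppgResidual]
  have hc : 0 < 1 - α * L / 2 := by
    have := (lt_div_iff₀ (by positivity)).mp hαL
    nlinarith
  have hstep : ∀ w, P w = 0 → ∀ k,
      ‖z (k + 1) - w‖ ^ 2 + (1 - α * L / 2) * ‖α • P (z k)‖ ^ 2 ≤ ‖z k - w‖ ^ 2 := by
    intro w hw k
    rw [hiter, hαP]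
    exact norm_sub_ppgResidual_sub_sq_add_le hα.le hL hPrf hPgf
      (hfconv.inv_mul_norm_sq_le_inner hf' hL hLip) (by rw [← hαP, hw, smul_zero]) (z k)
  obtain ⟨zs, hzs⟩ := hfix
  have hres : Tendsto (fun k => P (z k)) atTop (𝓝 0) := by
    simpa [hα.ne'] using (tendsto_zero_of_add_norm_sq_le (a := fun k => ‖z k - zs‖ ^ 2) hc
      (fun k => sq_nonneg _) (hstep zs hzs)).const_smul α⁻¹
  have hPc : Continuous P :=
    ((continuous_ppgResidual (α := α) hPrf.lipschitzWith.continuous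
      hPgf.lipschitzWith.continuous hf'c).const_smul α⁻¹).congr fun y => by
        rw [Pi.smul_apply, ← hαP, inv_smul_smul₀ hα.ne']
  obtain ⟨zinf, hzinf, hz⟩ := exists_mem_tendsto_of_fejer (S := {w | P w = 0}) ⟨zs, hzs⟩
    (fun w hw k => by
      rw [dist_eq_norm, dist_eq_norm, ← sq_le_sq₀ (norm_nonneg _) (norm_nonneg _)]
      nlinarith [hstep w hw k, sq_nonneg ‖α • P (z k)‖])
    (fun x φ hφ hzφ =>
      tendsto_nhds_unique ((hPc.tendsto x).comp hzφ) (hres.comp hφ.tendsto_atTop))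
  exact ⟨zinf, hz, hzinf, (hPrf.lipschitzWith.continuous.tendsto zinf).comp hz⟩
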